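/- Let S be the edge set of a spanning tree of G and let ℒ_S be its set of lonely cuts. Then for every subset ℒ' ⊆ ℒ_S it holds that x*(∪_{C∈ℒ'} C) ≥ |ℒ'|. -/

import Mathlib

open Finset
open scoped Classical symmDiff

/-- A multigraph on vertex type `V` with edge type `E`, given by the two endpoints
of each edge. -/
structure MultiGraph (V E : Type*) where
  fst : E → V
  snd : E → V

namespace MultiGraph

variable {V E : Type*} [Fintype V] [DecidableEq V] [Fintype E] [DecidableEq E]
variable (G : MultiGraph V E)

/-- The cut `δ(U)`: the set of edges with exactly one endpoint in `U`. -/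
noncomputable def cut (U : Finset V) : Finset E :=
  univ.filter fun e => (G.fst e ∈ U ∧ G.snd e ∉ U) ∨ (G.fst e ∉ U ∧ G.snd e ∈ U)

/-- The degree of `v` with respect to the edge multiset `F`. -/
def deg (F : Multiset E) (v : V) : ℕ :=
  (F.map fun e => (if G.fst e = v then 1 else 0) + (if G.snd e = v then 1 else 0)).sum

/-- `odd(F)`: the set of vertices of odd degree in `(V, F)`. -/
noncomputable def oddVerts (F : Multiset E) : Finset V :=
  univ.filter fun v => Odd (G.deg F v)

/-- Adjacency via an edge satisfying the predicate `P`. -/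
def Adj (P : E → Prop) (a b : V) : Prop :=
  ∃ e, P e ∧ ((G.fst e = a ∧ G.snd e = b) ∨ (G.fst e = b ∧ G.snd e = a))

/-- `(V, {e | P e})` is a connected (spanning) subgraph. -/
def ConnectedOn (P : E → Prop) : Prop :=
  ∀ u w : V, Relation.ReflTransGen (G.Adj P) u w

/-- The graph `G` is connected. -/
def Connected : Prop := G.ConnectedOn fun _ => True

/-- A `T`-tour: a multi-subset `F` of the edges such that `(V, F)` is connected and
`odd(F) = T`. -/
def IsTTour (T : Finset V) (F : Multiset E) : Prop :=
  G.ConnectedOn (· ∈ F) ∧ G.oddVerts F = T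

/-- `S` is the edge set of a spanning tree of `G`. -/
def IsSpanningTree (S : Finset E) : Prop :=
  G.ConnectedOn (· ∈ S) ∧ S.card + 1 = Fintype.card V

/-- `δ(𝒲)`: the set of edges whose endpoints lie in different parts of the
partition `𝒲` of `V`. -/
noncomputable def partitionCut (W : Finpartition (univ : Finset V)) : Finset E :=
  univ.filter fun e => ∀ P ∈ W.parts, ¬(G.fst e ∈ P ∧ G.snd e ∈ P)

/-- Feasibility for the standard LP relaxation of the `T`-tour problem. -/
def LPFeasible (T : Finset V) (x : E → ℝ) : Prop :=
  (∀ e, 0 ≤ x e) ∧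
  (∀ U : Finset V, U.Nonempty → U ≠ univ → Even ((T ∩ U).card) →
    2 ≤ ∑ e ∈ G.cut U, x e) ∧
  (∀ W : Finpartition (univ : Finset V),
    (W.parts.card : ℝ) - 1 ≤ ∑ e ∈ G.partitionCut W, x e)

/-- `C` is a cut of `G`, i.e. `C = δ(U)` for some nonempty proper `U ⊆ V`. -/
def IsCut (C : Finset E) : Prop :=
  ∃ U : Finset V, U.Nonempty ∧ U ≠ univ ∧ C = G.cut U

/-- A narrow cut: a cut `C` with `x(C) < 2`. -/
def Narrow (x : E → ℝ) (C : Finset E) : Prop :=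
  G.IsCut C ∧ ∑ e ∈ C, x e < 2

/-- `𝒩`: the set of narrow cuts. -/
noncomputable def narrowCuts (x : E → ℝ) : Finset (Finset E) :=
  univ.filter fun C => G.Narrow x C

/-- A narrow cut `C` is lonely for `S` if `|S ∩ C| = 1`. -/
def Lonely (x : E → ℝ) (S C : Finset E) : Prop :=
  G.Narrow x C ∧ (S ∩ C).card = 1

/-- `ℒ_S`: the set of lonely cuts of `S`. -/
noncomputable def lonelyCuts (x : E → ℝ) (S : Finset E) : Finset (Finset E) :=
  univ.filter fun C => G.Lonely x S C

/-- `L_S = ∪_{C ∈ ℒ_S} (S ∩ C)`: the set of lonely edges of `S`. -/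
noncomputable def lonelyEdges (x : E → ℝ) (S : Finset E) : Finset E :=
  S.filter fun e => ∃ C, G.Lonely x S C ∧ e ∈ C

/-- The incidence vector `χ^F` of an edge set `F`. -/
def chi (F : Finset E) : E → ℝ := fun e => if e ∈ F then 1 else 0

/-- The vector `v^C = (1/(2 - x(C))) · Σ_{S : C ∈ ℒ_S} p_S · χ^{S ∩ C}`. -/
noncomputable def vC (x : E → ℝ) (p : Finset E → ℝ) (C : Finset E) : E → ℝ :=
  fun e => (1 / (2 - ∑ f ∈ C, x f)) *
    ∑ S : Finset E, (if G.Lonely x S C then p S else 0) * chi (S ∩ C) e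

/-- The modified cost
`c^S(e) = c(e) + 2·(Σ_{C ∈ ℒ_S : e ∈ C} c(S ∩ C) − max_{C ∈ ℒ_S : e ∈ C} c(S ∩ C))`,
where the maximum over the empty set is `0`. -/
noncomputable def modCost (c x : E → ℝ) (S : Finset E) (e : E) : ℝ :=
  c e + 2 * ((∑ C ∈ (G.lonelyCuts x S).filter (fun C => e ∈ C), ∑ f ∈ S ∩ C, c f)
    - (if h : ((G.lonelyCuts x S).filter (fun C => e ∈ C)).Nonempty
        then ((G.lonelyCuts x S).filter (fun C => e ∈ C)).sup' h (fun C => ∑ f ∈ S ∩ C, c f)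
        else 0))

/-- The set of vertices reachable from `v` using edges satisfying `P`. -/
noncomputable def reachSet (P : E → Prop) (v : V) : Finset V :=
  univ.filter fun w => Relation.ReflTransGen (G.Adj P) v w

end MultiGraph

/-!
A lonely cut `C ∈ ℒ'` meets the tree `S` in a single edge `e_C`, and since `S` is connected,
`e_C` determines `C`; hence `e_C` crosses no other cut of `ℒ'`. Sort the vertices by the set of
shores of cuts of `ℒ'` containing them: each cut splits the class of the endpoints of its edge
`e_C`, so there are at least `|ℒ'| + 1` classes, and every edge between two classes lies in some
`C ∈ ℒ'`. The partition inequality of the LP then gives `x*(⋃ ℒ') ≥ |ℒ'|`.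
-/

theorem Finpartition.card_parts_ofSetoid_ker {α β : Type*} [Fintype α] [DecidableEq α]
    [DecidableEq β] (K : α → β) [DecidableRel (Setoid.ker K).r] :
    #(Finpartition.ofSetoid (Setoid.ker K)).parts = #(univ.image K) := by
  have hfiber : Set.InjOn (fun t => univ.filter (t = K ·)) (univ.image K : Finset β) := by
    intro t ht t' _ h
    obtain ⟨a, -, rfl⟩ := mem_image.mp ht
    have : a ∈ univ.filter (t' = K ·) := by simp only at h; simp [← h]
    exact ((mem_filter.mp this).2).symm
  rw [← card_image_of_injOn hfiber, image_image]
  simp only [Finpartition.ofSetoid, Finpartition.ofSetSetoid, Setoid.ker_def, Function.comp_def]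
  congr!

theorem Finset.card_add_one_le_card_image_filter_mem {V ι : Type*} [Fintype V] [DecidableEq V]
    [Nonempty V] [DecidableEq ι] (U : ι → Finset V) (M : Finset ι)
    (hsep : ∀ i ∈ M, ∃ a b : V, ¬(a ∈ U i ↔ b ∈ U i) ∧
      ∀ j ∈ M, j ≠ i → (a ∈ U j ↔ b ∈ U j)) :
    #M + 1 ≤ #(univ.image fun w => M.filter (w ∈ U ·)) := by
  induction M using Finset.induction_on with
  | empty => simp
  | @insert i M hiM ih =>
    obtain ⟨a, b, hab, hothers⟩ := hsep i (mem_insert_self i M)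
    have ih := ih fun j hj => by
      obtain ⟨a, b, hab, h⟩ := hsep j (mem_insert_of_mem hj)
      exact ⟨a, b, hab, fun k hk => h k (mem_insert_of_mem hk)⟩
    set key := fun (N : Finset ι) (w : V) => N.filter (w ∈ U ·)
    change #M + 1 ≤ #(univ.image (key M)) at ih
    change _ ≤ #(univ.image (key (insert i M)))
    have herase : ∀ w, (key (insert i M) w).erase i = key M w := by
      intro w
      simp only [key, filter_insert]
      split_ifs <;> simp [erase_eq_of_notMem, hiM]
    have hrestrict : (univ.image (key (insert i M))).image (·.erase i) = univ.image (key M) := by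
      rw [image_image]
      exact image_congr fun w _ => herase w
    have hsplit : key (insert i M) a ≠ key (insert i M) b := fun h =>
      hab (by simpa [key] using congrArg (i ∈ ·) h)
    have hmerge : key M a = key M b :=
      filter_congr fun j hj => hothers j (mem_insert_of_mem hj) (ne_of_mem_of_not_mem hj hiM)
    have hnotInj : ¬Set.InjOn (·.erase i) (univ.image (key (insert i M)) : Set (Finset ι)) :=
      fun hinj => hsplit (hinj (by simp) (by simp) (by simp only [herase, hmerge]))
    have hlt := lt_of_le_of_ne card_image_le (mt card_image_iff.mp hnotInj)
    rw [hrestrict] at hlt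
    rw [card_insert_of_notMem hiM]
    omega

namespace MultiGraph

variable {V E : Type*} {G : MultiGraph V E}

theorem ConnectedOn.reflTransGen_fst_or_snd {P : E → Prop} (hP : G.ConnectedOn P) (e : E)
    (w : V) :
    Relation.ReflTransGen (G.Adj fun f => P f ∧ f ≠ e) (G.fst e) w ∨
      Relation.ReflTransGen (G.Adj fun f => P f ∧ f ≠ e) (G.snd e) w := by
  induction hP (G.fst e) w with
  | refl => exact Or.inl .refl
  | tail _ hadj ih =>
    obtain ⟨f, hf, hends⟩ := hadj
    by_cases hfe : f = e
    · subst hfe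
      rcases hends with ⟨-, rfl⟩ | ⟨rfl, -⟩
      · exact Or.inr .refl
      · exact Or.inl .refl
    · exact ih.imp (·.tail ⟨f, ⟨hf, hfe⟩, hends⟩) (·.tail ⟨f, ⟨hf, hfe⟩, hends⟩)

section

variable [DecidableEq V] [Fintype E]

theorem mem_cut_iff {U : Finset V} {e : E} :
    e ∈ G.cut U ↔ ¬(G.fst e ∈ U ↔ G.snd e ∈ U) := by
  simp only [cut, mem_filter, mem_univ, true_and]
  tauto

theorem mem_iff_mem_of_reflTransGen {P : E → Prop} {U : Finset V} {a w : V}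
    (hP : ∀ e, P e → e ∉ G.cut U) (h : Relation.ReflTransGen (G.Adj P) a w) :
    a ∈ U ↔ w ∈ U := by
  induction h with
  | refl => rfl
  | tail _ hadj ih =>
    obtain ⟨e, he, hends⟩ := hadj
    have := mem_cut_iff.not_left.mp (hP e he)
    rcases hends with ⟨rfl, rfl⟩ | ⟨rfl, rfl⟩ <;> tauto

/-- Removing `e` from `S` leaves every vertex joined within `S` to an endpoint of `e`, and no other
edge of `S` changes sides. -/
theorem cut_eq_cut_of_inter_eq_singleton [DecidableEq E] {S : Finset E} {U U' : Finset V}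
    {e : E} (hS : G.ConnectedOn (· ∈ S)) (hU : S ∩ G.cut U = {e})
    (hU' : S ∩ G.cut U' = {e}) :
    G.cut U = G.cut U' := by
  have hside : ∀ {U}, S ∩ G.cut U = {e} →
      ∀ {a w}, Relation.ReflTransGen (G.Adj fun f => f ∈ S ∧ f ≠ e) a w →
        (a ∈ U ↔ w ∈ U) :=
    fun hU => mem_iff_mem_of_reflTransGen fun f ⟨hfS, hfe⟩ hf =>
      hfe (mem_singleton.mp (hU ▸ mem_inter.mpr ⟨hfS, hf⟩))
  have hcross : ∀ {U}, S ∩ G.cut U = {e} → ¬(G.fst e ∈ U ↔ G.snd e ∈ U) :=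
    fun hU => mem_cut_iff.mp (mem_inter.mp (hU ▸ mem_singleton_self e)).2
  have hflip : ∀ w, (w ∈ U ↔ w ∈ U') ↔ (G.fst e ∈ U ↔ G.fst e ∈ U') := by
    intro w
    have := hcross hU
    have := hcross hU'
    rcases hS.reflTransGen_fst_or_snd e w with h | h
    all_goals
      have := hside hU h
      have := hside hU' h
      tauto
  ext g
  have := hflip (G.fst g)
  have := hflip (G.snd g)
  rw [mem_cut_iff, mem_cut_iff]
  tauto

variable [Fintype V]

/-- Some `U` with `C = δ(U)`, and `∅` if `C` is not a cut. -/
noncomputable def shore (G : MultiGraph V E) (C : Finset E) : Finset V :=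
  if h : G.IsCut C then h.choose else ∅

theorem IsCut.cut_shore {C : Finset E} (h : G.IsCut C) : G.cut (G.shore C) = C := by
  rw [shore, dif_pos h]
  exact h.choose_spec.2.2.symm

theorem ne_of_mem_partitionCut_ofSetoid_ker {β : Type*} {K : V → β} {g : E}
    (hg : g ∈ G.partitionCut (Finpartition.ofSetoid (Setoid.ker K))) :
    K (G.fst g) ≠ K (G.snd g) := by
  intro hK
  simp only [partitionCut, mem_filter, mem_univ, true_and] at hg
  exact hg _ ((Finpartition.ofSetoid _).part_mem.mpr (mem_univ _))
    ⟨Finpartition.mem_part_ofSetoid_iff_rel.mpr rfl,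
      Finpartition.mem_part_ofSetoid_iff_rel.mpr hK⟩

variable [DecidableEq E]

theorem IsCut.eq_of_inter_eq_singleton {S C C' : Finset E} {e : E}
    (hS : G.ConnectedOn (· ∈ S)) (hC : G.IsCut C) (hC' : G.IsCut C')
    (he : S ∩ C = {e}) (he' : S ∩ C' = {e}) : C = C' := by
  rw [← hC.cut_shore] at he ⊢
  rw [← hC'.cut_shore] at he' ⊢
  exact cut_eq_cut_of_inter_eq_singleton hS he he'

theorem exists_pair_separated_only_by_shore {S : Finset E} {L : Finset (Finset E)}
    (hS : G.ConnectedOn (· ∈ S)) (hL : ∀ C ∈ L, G.IsCut C ∧ #(S ∩ C) = 1) :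
    ∀ C ∈ L, ∃ a b, ¬(a ∈ G.shore C ↔ b ∈ G.shore C) ∧
      ∀ C' ∈ L, C' ≠ C → (a ∈ G.shore C' ↔ b ∈ G.shore C') := by
  intro C hC
  obtain ⟨hcut, hcard⟩ := hL C hC
  obtain ⟨e, he⟩ := card_eq_one.mp hcard
  have heS := mem_inter.mp (he ▸ mem_singleton_self e)
  refine ⟨G.fst e, G.snd e, mem_cut_iff.mp (by rw [hcut.cut_shore]; exact heS.2), ?_⟩
  intro C' hC' hne
  obtain ⟨hcut', hcard'⟩ := hL C' hC'
  refine not_not.mp fun hcross => hne ?_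
  have heC' : e ∈ C' := hcut'.cut_shore ▸ mem_cut_iff.mpr hcross
  obtain ⟨e', he'⟩ := card_eq_one.mp hcard'
  obtain rfl : e = e' := mem_singleton.mp (he' ▸ mem_inter.mpr ⟨heS.1, heC'⟩)
  exact (hcut.eq_of_inter_eq_singleton hS hcut' he he').symm

theorem partitionCut_ofSetoid_ker_shores_subset {L : Finset (Finset E)}
    (hL : ∀ C ∈ L, G.IsCut C) :
    G.partitionCut (Finpartition.ofSetoid (Setoid.ker fun w => L.filter (w ∈ G.shore ·))) ⊆
      L.biUnion id := by
  intro g hg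
  obtain ⟨C, hC, hgC⟩ : ∃ C ∈ L, ¬(G.fst g ∈ G.shore C ↔ G.snd g ∈ G.shore C) := by
    by_contra! h
    exact ne_of_mem_partitionCut_ofSetoid_ker hg (filter_congr h)
  exact mem_biUnion.mpr ⟨C, hC, (hL C hC).cut_shore ▸ mem_cut_iff.mpr hgC⟩

end

variable [Fintype V] [DecidableEq V] [Fintype E] [DecidableEq E]

theorem hall_condition_lonely_cuts_general (G : MultiGraph V E)
    (T : Finset V) (x : E → ℝ) (hx : G.LPFeasible T x)
    (S : Finset E) (hS : G.IsSpanningTree S)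
    (L' : Finset (Finset E)) (hL' : ∀ C ∈ L', G.Lonely x S C) :
    (L'.card : ℝ) ≤ ∑ e ∈ L'.biUnion id, x e := by
  rcases L'.eq_empty_or_nonempty with rfl | ⟨C₀, hC₀⟩
  · simp
  have : Nonempty V := by
    obtain ⟨U, ⟨v, -⟩, -⟩ := (hL' C₀ hC₀).1.1
    exact ⟨v⟩
  set W := Finpartition.ofSetoid (Setoid.ker fun w => L'.filter (w ∈ G.shore ·))
  have hcount : #L' + 1 ≤ #W.parts := by
    rw [Finpartition.card_parts_ofSetoid_ker]
    exact card_add_one_le_card_image_filter_mem _ _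
      (exists_pair_separated_only_by_shore hS.1 fun C hC => ⟨(hL' C hC).1.1, (hL' C hC).2⟩)
  calc (L'.card : ℝ)
      ≤ #W.parts - 1 := by rw [le_sub_iff_add_le]; exact_mod_cast hcount
    _ ≤ ∑ e ∈ G.partitionCut W, x e := hx.2.2 W
    _ ≤ ∑ e ∈ L'.biUnion id, x e :=
        sum_le_sum_of_subset_of_nonneg (partitionCut_ofSetoid_ker_shores_subset
          fun C hC => (hL' C hC).1.1) fun e _ _ => hx.1 e

/-- For every spanning tree `S` and every subset `ℒ' ⊆ ℒ_S` of its
lonely cuts, `x*(∪_{C ∈ ℒ'} C) ≥ |ℒ'|`. -/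
theorem hall_condition_lonely_cuts (G : MultiGraph V E) (hG : G.Connected)
    (T : Finset V) (hT : Even T.card) (x : E → ℝ) (hx : G.LPFeasible T x)
    (S : Finset E) (hS : G.IsSpanningTree S)
    (L' : Finset (Finset E)) (hL' : ∀ C ∈ L', G.Lonely x S C) :
    (L'.card : ℝ) ≤ ∑ e ∈ L'.biUnion id, x e :=
  hall_condition_lonely_cuts_general G T x hx S hS L' hL'

end MultiGraph
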